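/- The function u_T^*(t,r) = (c1(T-t)^2 - c2 r^2)/(r^2 + c3(T-t)^2)^2 with d=7, c1 = 4/25*((3*7-8)*d0 + 8*49 - 56*7 + 48), c2 = 4/5*d0, c3 = 1/15*(3*7 - 18 + d0), d0 = sqrt(6*6*1) = 6, i.e. U(ρ) = 24(21 - 5ρ^2)/(3 + 5ρ^2)^2 and u_T^*(t,r) = (T-t)^{-2} U(r/(T-t)), satisfies the radial quadratic wave equation ∂_t^2 u - ∂_r^2 u - (6/r) ∂_r u = u^2 for all (t,r) with (t,r) ≠ (T,0) and r > 0. -/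

import Mathlib

/-!
In the time variable (shifted by `T`) and in the radial variable alike, `u_T^*` is a rational
function of the form `(A x² + B) / (C x² + E)²`. Its first two derivatives are again explicit
rational functions, and substituting them into the equation leaves a polynomial identity.
-/

section SqRatio

variable (A B C E : ℝ)

noncomputable def sqRatio (x : ℝ) : ℝ := (A * x ^ 2 + B) / (C * x ^ 2 + E) ^ 2

noncomputable def sqRatioDeriv (x : ℝ) : ℝ :=
  (-2 * A * C * x ^ 3 + (2 * A * E - 4 * B * C) * x) / (C * x ^ 2 + E) ^ 3

noncomputable def sqRatioDeriv2 (x : ℝ) : ℝ :=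
  (6 * A * C ^ 2 * x ^ 4 + (20 * B * C ^ 2 - 16 * A * C * E) * x ^ 2
    + 2 * A * E ^ 2 - 4 * B * C * E) / (C * x ^ 2 + E) ^ 4

variable {A B C E}

theorem hasDerivAt_mul_sq_add (a b x : ℝ) :
    HasDerivAt (fun x : ℝ => a * x ^ 2 + b) (a * (2 * x)) x := by
  simpa using ((hasDerivAt_pow 2 x).const_mul a).add_const b

theorem hasDerivAt_sqRatio {x : ℝ} (h : C * x ^ 2 + E ≠ 0) :
    HasDerivAt (sqRatio A B C E) (sqRatioDeriv A B C E x) x := by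
  refine ((hasDerivAt_mul_sq_add A B x).div ((hasDerivAt_mul_sq_add C E x).pow 2)
    (pow_ne_zero 2 h)).congr_deriv ?_
  simp only [sqRatioDeriv, Pi.pow_apply, Nat.add_one_sub_one, pow_one, Nat.cast_ofNat]
  field_simp
  ring

theorem hasDerivAt_sqRatioDeriv {x : ℝ} (h : C * x ^ 2 + E ≠ 0) :
    HasDerivAt (sqRatioDeriv A B C E) (sqRatioDeriv2 A B C E x) x := by
  have hnum : HasDerivAt (fun x : ℝ => -2 * A * C * x ^ 3 + (2 * A * E - 4 * B * C) * x)
      (-2 * A * C * (3 * x ^ 2) + (2 * A * E - 4 * B * C)) x := by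
    refine (((hasDerivAt_pow 3 x).const_mul (-2 * A * C)).add
      ((hasDerivAt_id x).const_mul (2 * A * E - 4 * B * C))).congr_deriv ?_
    simp
  refine (hnum.div ((hasDerivAt_mul_sq_add C E x).pow 3) (pow_ne_zero 3 h)).congr_deriv ?_
  simp only [sqRatioDeriv2, Pi.pow_apply, Nat.cast_ofNat]
  field_simp
  ring

theorem deriv_sqRatio {x : ℝ} (h : C * x ^ 2 + E ≠ 0) :
    deriv (sqRatio A B C E) x = sqRatioDeriv A B C E x :=
  (hasDerivAt_sqRatio h).deriv

theorem deriv_deriv_sqRatio {x : ℝ} (h : C * x ^ 2 + E ≠ 0) :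
    deriv (deriv (sqRatio A B C E)) x = sqRatioDeriv2 A B C E x := by
  have hnear : ∀ᶠ y in nhds x, C * y ^ 2 + E ≠ 0 :=
    (by fun_prop : Continuous fun y : ℝ => C * y ^ 2 + E).continuousAt.eventually_ne h
  have hderiv : deriv (sqRatio A B C E) =ᶠ[nhds x] sqRatioDeriv A B C E :=
    hnear.mono fun _ => deriv_sqRatio
  rw [hderiv.deriv_eq]
  exact (hasDerivAt_sqRatioDeriv h).deriv

end SqRatio

theorem uTstar_solves_quadratic_wave (T : ℝ) (u : ℝ → ℝ → ℝ)
    (hu : ∀ t r : ℝ, u t r = 24 * (21 * (T - t) ^ 2 - 5 * r ^ 2) /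
      (3 * (T - t) ^ 2 + 5 * r ^ 2) ^ 2) :
    ∀ t r : ℝ, 0 < r → (t, r) ≠ (T, 0) →
      deriv (deriv (fun t' => u t' r)) t - deriv (deriv (fun r' => u t r')) r
        - (6 / r) * deriv (fun r' => u t r') r = (u t r) ^ 2 := by
  intro t r hr _
  have hu_t :
      (fun t' => u t' r) = fun t' => sqRatio 504 (-120 * r ^ 2) 3 (5 * r ^ 2) (t' - T) := by
    funext t'
    rw [hu, sqRatio]
    ring
  have hu_r : (fun r' => u t r') = sqRatio (-120) (504 * (T - t) ^ 2) 5 (3 * (T - t) ^ 2) := by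
    funext r'
    rw [hu, sqRatio]
    ring
  have hden_t : 3 * (t - T) ^ 2 + 5 * r ^ 2 ≠ 0 := by positivity
  have hden_r : 5 * r ^ 2 + 3 * (T - t) ^ 2 ≠ 0 := by positivity
  have hshift : deriv (fun t' => sqRatio 504 (-120 * r ^ 2) 3 (5 * r ^ 2) (t' - T)) =
      fun t' => deriv (sqRatio 504 (-120 * r ^ 2) 3 (5 * r ^ 2)) (t' - T) :=
    funext (deriv_comp_sub_const _ T)
  rw [hu_t, hshift, deriv_comp_sub_const, hu_r, deriv_deriv_sqRatio hden_t,
    deriv_deriv_sqRatio hden_r, deriv_sqRatio hden_r, hu]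
  simp only [sqRatioDeriv, sqRatioDeriv2]
  rw [show T - t = -(t - T) by ring] at hden_r ⊢
  generalize t - T = s at *
  field_simp
  ring
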